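/- Let $\alpha \in (1/2, 1)$ and $\mu > 1$. For the function $\tilde u_{\alpha,\mu}$ on $\mathbb{R}^2$ given by $\tilde u(y) = \frac{1}{\alpha}\ln\frac{1+|y|^2}{\mu^2+|y|^2}$, one has $\frac{1}{4\pi}\int_{\mathbb{R}^2} e^{2\tilde u(y)}\frac{4}{(1+|y|^2)^2}\,dy = \frac{1-\mu^{2-4/\alpha}}{(\frac{2}{\alpha}-1)(\mu^2-1)}$. -/

import Mathlib

open MeasureTheory

/-- `ũ_{α,μ}(y) = (1/α) ln((1+|y|²)/(μ²+|y|²))` on `ℝ²`. -/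
noncomputable def uTilde (α μ : ℝ) (y : EuclideanSpace ℝ (Fin 2)) : ℝ :=
  (1 / α) * Real.log ((1 + ‖y‖ ^ 2) / (μ ^ 2 + ‖y‖ ^ 2))

open Real Set Filter Topology

/-! In polar coordinates the integral is `8π ∫₀^∞ r q(r)^{2/α} / (1+r²)² dr` with
`q(r) = (1+r²)/(μ²+r²)`. Since `q'(r) = 2(μ²-1) r / (μ²+r²)²`, this integrand is, up to the factor
`2(2/α-1)(μ²-1)`, the derivative of `q^{2/α-1}`, which increases from `μ^{2-4/α}` at `r = 0` to `1`
at infinity. -/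

lemma integral_fun_norm_euclideanSpace_fin_two (f : ℝ → ℝ) :
    ∫ y : EuclideanSpace ℝ (Fin 2), f ‖y‖ = 2 * π * ∫ r in Ioi (0 : ℝ), r * f r := by
  rw [integral_fun_norm_addHaar volume f]
  simp [measureReal_def, ENNReal.toReal_ofReal pi_pos.le, mul_assoc]

section QuotientOfShiftedSquares

variable {a b : ℝ}

lemma hasDerivAt_div_add_sq_rpow (ha : 0 < a) (hb : 0 < b) (s r : ℝ) :
    HasDerivAt (fun r => ((a + r ^ 2) / (b + r ^ 2)) ^ s)
      (2 * s * (b - a) * (r * (((a + r ^ 2) / (b + r ^ 2)) ^ (s + 1) / (a + r ^ 2) ^ 2))) r := by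
  have hA : 0 < a + r ^ 2 := by positivity
  have hB : 0 < b + r ^ 2 := by positivity
  have hquot : HasDerivAt (fun r => (a + r ^ 2) / (b + r ^ 2))
      (2 * (b - a) * r / (b + r ^ 2) ^ 2) r :=
    (((hasDerivAt_pow 2 r).const_add a).div ((hasDerivAt_pow 2 r).const_add b)
      hB.ne').congr_deriv (by ring)
  refine (hquot.rpow_const (p := s) (Or.inl (div_pos hA hB).ne')).congr_deriv ?_
  rw [div_rpow hA.le hB.le, div_rpow hA.le hB.le, rpow_sub_one hA.ne', rpow_sub_one hB.ne',
    rpow_add_one hA.ne', rpow_add_one hB.ne']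
  field_simp

lemma tendsto_div_add_sq_atTop (hb : 0 < b) :
    Tendsto (fun r => (a + r ^ 2) / (b + r ^ 2)) atTop (𝓝 1) := by
  have hrest : Tendsto (fun r : ℝ => (a - b) / (b + r ^ 2)) atTop (𝓝 0) :=
    tendsto_const_nhds.div_atTop
      (tendsto_atTop_add_const_left _ _ (tendsto_pow_atTop two_ne_zero))
  refine (by simpa using hrest.const_add 1 : Tendsto _ _ (𝓝 (1 : ℝ))).congr fun r => ?_
  have hB : 0 < b + r ^ 2 := by positivity
  field_simp
  ring

lemma integral_Ioi_mul_div_add_sq_rpow (ha : 0 < a) (hab : a < b) {p : ℝ} (hp : 1 < p) :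
    ∫ r in Ioi (0 : ℝ), r * (((a + r ^ 2) / (b + r ^ 2)) ^ p / (a + r ^ 2) ^ 2) =
      (1 - (a / b) ^ (p - 1)) / (2 * (p - 1) * (b - a)) := by
  have hb : 0 < b := ha.trans hab
  have hc : 0 < 2 * (p - 1) * (b - a) := by
    have := sub_pos.2 hp; have := sub_pos.2 hab; positivity
  have hFTC := integral_Ioi_of_hasDerivAt_of_nonneg'
    (fun r _ => hasDerivAt_div_add_sq_rpow ha hb (p - 1) r)
    (fun r hr => mul_nonneg hc.le (mul_nonneg (le_of_lt hr) (by positivity)))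
    ((tendsto_div_add_sq_atTop hb).rpow_const (Or.inl one_ne_zero))
  simp only [sub_add_cancel, integral_const_mul, one_rpow] at hFTC
  rw [eq_div_iff hc.ne', mul_comm, hFTC]
  norm_num

end QuotientOfShiftedSquares

lemma exp_two_mul_uTilde (α : ℝ) {μ : ℝ} (hμ : μ ≠ 0) (y : EuclideanSpace ℝ (Fin 2)) :
    exp (2 * uTilde α μ y) = ((1 + ‖y‖ ^ 2) / (μ ^ 2 + ‖y‖ ^ 2)) ^ (2 / α) := by
  have hq : 0 < (1 + ‖y‖ ^ 2) / (μ ^ 2 + ‖y‖ ^ 2) := by positivity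
  rw [uTilde, rpow_def_of_pos hq]
  ring_nf

/-- for `α ∈ (1/2,1)` and `μ > 1`,
`(1/4π) ∫_{ℝ²} e^{2ũ(y)} · 4/(1+|y|²)² dy = (1 - μ^{2-4/α})/((2/α - 1)(μ²-1))`. -/
theorem stmt9 (α μ : ℝ) (hα : α ∈ Set.Ioo (1/2 : ℝ) 1) (hμ : 1 < μ) :
    (1 / (4 * Real.pi)) * ∫ y : EuclideanSpace ℝ (Fin 2),
        Real.exp (2 * uTilde α μ y) * (4 / (1 + ‖y‖ ^ 2) ^ 2) =
      (1 - μ ^ (2 - 4 / α)) / ((2 / α - 1) * (μ ^ 2 - 1)) := by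
  have hα0 : 0 < α := by linarith [hα.1]
  have hp : 1 < 2 / α := by rw [one_lt_div hα0]; linarith [hα.2]
  have hμ2 : 1 < μ ^ 2 := one_lt_pow₀ hμ two_ne_zero
  have hradial := integral_Ioi_mul_div_add_sq_rpow one_pos hμ2 hp
  have hpow : (1 / μ ^ 2) ^ (2 / α - 1) = μ ^ (2 - 4 / α) := by
    rw [one_div, inv_rpow (by positivity), ← rpow_natCast, ← rpow_mul (by positivity),
      ← rpow_neg (by positivity)]
    ring_nf
  simp_rw [exp_two_mul_uTilde α (by positivity : μ ≠ 0), mul_div_assoc', mul_comm _ (4 : ℝ),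
    mul_div_assoc, integral_const_mul, integral_fun_norm_euclideanSpace_fin_two
      (fun r => ((1 + r ^ 2) / (μ ^ 2 + r ^ 2)) ^ (2 / α) / (1 + r ^ 2) ^ 2), hradial, hpow]
  have hp_ne : 2 / α - 1 ≠ 0 := by linarith
  have hμ2_ne : μ ^ 2 - 1 ≠ 0 := by linarith
  field_simp
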